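/- arXiv:1706.02329 — 8 statements merged into one kernel-verified Lean document; each statement's English description precedes it below -/
import Mathlib

section
/- Two rank-n projections P and Q are adjacent (i.e., dim(range P ∩ range Q) = n − 1) if and only if rank(P − Q) = 2. -/
open Matrix Module Submodule

section Aux

variable {E : Type*} [NormedAddCommGroup E] [InnerProductSpace ℂ E]

lemma aux_ker_eq_orth (T : E →ₗ[ℂ] E) (hT : T.IsSymmetric)
    (hT2 : ∀ x, T (T x) = T x) : LinearMap.ker T = (LinearMap.range T)ᗮ := by
  ext x
  rw [Submodule.mem_orthogonal]
  constructor
  · intro hx u hu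
    obtain ⟨w, rfl⟩ := hu
    rw [hT w x, LinearMap.mem_ker.mp hx, inner_zero_right]
  · intro h
    have h0 : (inner ℂ (T x) x : ℂ) = 0 := h (T x) ⟨x, rfl⟩
    have h1 : (inner ℂ (T x) (T x) : ℂ) = 0 := by
      rw [hT x (T x), hT2, ← hT x x, h0]
    exact LinearMap.mem_ker.mpr (inner_self_eq_zero.mp h1)

lemma aux_key [FiniteDimensional ℂ E] (T S : E →ₗ[ℂ] E)
    (hT : T.IsSymmetric) (hS : S.IsSymmetric)
    (hT2 : ∀ x, T (T x) = T x) (hS2 : ∀ x, S (S x) = S x) :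
    finrank ℂ (LinearMap.range (T - S))
      + 2 * finrank ℂ ↥(LinearMap.range T ⊓ LinearMap.range S)
      = finrank ℂ (LinearMap.range T) + finrank ℂ (LinearMap.range S) := by
  have hTx : ∀ x, x ∈ LinearMap.range T → T x = x := by
    rintro x ⟨a, rfl⟩; exact hT2 a
  have hSx : ∀ x, x ∈ LinearMap.range S → S x = x := by
    rintro x ⟨a, rfl⟩; exact hS2 a
  have hker : LinearMap.ker (T - S)
      = (LinearMap.range T ⊓ LinearMap.range S) ⊔ (LinearMap.ker T ⊓ LinearMap.ker S) := by
    apply le_antisymm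
    · intro x hx
      have hx' : T x = S x := by
        have := LinearMap.mem_ker.mp hx
        simpa [sub_eq_zero] using this
      refine Submodule.mem_sup.mpr ⟨T x, ⟨⟨x, rfl⟩, ⟨x, hx'.symm⟩⟩, x - T x, ⟨?_, ?_⟩, by abel⟩
      · simp [LinearMap.mem_ker, map_sub, hT2]
      · simp [LinearMap.mem_ker, map_sub, hx', hS2]
    · apply sup_le
      · rintro x ⟨hx1, hx2⟩
        simp [LinearMap.mem_ker, hTx x hx1, hSx x hx2]
      · rintro x ⟨hx1, hx2⟩
        simp [LinearMap.mem_ker, LinearMap.mem_ker.mp hx1, LinearMap.mem_ker.mp hx2]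
  have hdisj : (LinearMap.range T ⊓ LinearMap.range S) ⊓ (LinearMap.ker T ⊓ LinearMap.ker S) = ⊥ := by
    refine (Submodule.eq_bot_iff _).mpr ?_
    rintro x ⟨⟨hx1, -⟩, hx3, -⟩
    rw [← hTx x hx1]
    exact LinearMap.mem_ker.mp hx3
  have h1 := Submodule.finrank_sup_add_finrank_inf_eq
    (LinearMap.range T ⊓ LinearMap.range S) (LinearMap.ker T ⊓ LinearMap.ker S)
  rw [hdisj, finrank_bot, ← hker] at h1
  have h2 : LinearMap.ker T ⊓ LinearMap.ker S = (LinearMap.range T ⊔ LinearMap.range S)ᗮ := by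
    rw [aux_ker_eq_orth T hT hT2, aux_ker_eq_orth S hS hS2, Submodule.inf_orthogonal]
  have h3 := Submodule.finrank_add_finrank_orthogonal (LinearMap.range T ⊔ LinearMap.range S)
  rw [← h2] at h3
  have h4 := Submodule.finrank_sup_add_finrank_inf_eq (LinearMap.range T) (LinearMap.range S)
  have h5 := LinearMap.finrank_range_add_finrank_ker (T - S)
  have h6 := LinearMap.finrank_range_add_finrank_ker T
  omega

end Aux

theorem adjacent_iff_rank_sub_eq_two
    {d n : ℕ} (hn : 1 ≤ n) (P Q : Matrix (Fin d) (Fin d) ℂ)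
    (hP : P.IsHermitian ∧ P * P = P ∧ P.rank = n)
    (hQ : Q.IsHermitian ∧ Q * Q = Q ∧ Q.rank = n) :
    Module.finrank ℂ ↥(LinearMap.range P.mulVecLin ⊓ LinearMap.range Q.mulVecLin) = n - 1
    ↔ (P - Q).rank = 2 := by
  obtain ⟨hPh, hP2, hPr⟩ := hP
  obtain ⟨hQh, hQ2, hQr⟩ := hQ
  set e : EuclideanSpace ℂ (Fin d) ≃ₗ[ℂ] (Fin d → ℂ) := WithLp.linearEquiv 2 ℂ (Fin d → ℂ)
  have hcomp : ∀ M : Matrix (Fin d) (Fin d) ℂ,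
      M.toEuclideanLin = e.symm.toLinearMap ∘ₗ M.mulVecLin ∘ₗ e.toLinearMap := by
    intro M; rfl
  have hrange : ∀ M : Matrix (Fin d) (Fin d) ℂ,
      LinearMap.range M.toEuclideanLin
        = Submodule.map (e.symm : (Fin d → ℂ) →ₗ[ℂ] EuclideanSpace ℂ (Fin d))
          (LinearMap.range M.mulVecLin) := by
    intro M
    rw [hcomp, LinearMap.range_comp, LinearMap.range_comp, LinearEquiv.range, Submodule.map_top]
  have hrank : ∀ M : Matrix (Fin d) (Fin d) ℂ,
      M.rank = finrank ℂ (LinearMap.range M.toEuclideanLin) := by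
    intro M
    rw [hrange, LinearEquiv.finrank_map_eq e.symm]
    rfl
  have hinf : finrank ℂ ↥(LinearMap.range P.toEuclideanLin ⊓ LinearMap.range Q.toEuclideanLin)
      = finrank ℂ ↥(LinearMap.range P.mulVecLin ⊓ LinearMap.range Q.mulVecLin) := by
    rw [hrange, hrange,
      ← Submodule.map_inf (e.symm : (Fin d → ℂ) →ₗ[ℂ] EuclideanSpace ℂ (Fin d))
        (by simpa using e.symm.injective),
      LinearEquiv.finrank_map_eq e.symm]
  have hidem : ∀ M : Matrix (Fin d) (Fin d) ℂ, M * M = M → ∀ x, M.toEuclideanLin (M.toEuclideanLin x) = M.toEuclideanLin x := by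
    intro M hM x
    rw [hcomp]
    simp only [LinearMap.comp_apply, LinearEquiv.coe_coe, LinearEquiv.apply_symm_apply]
    congr 1
    have h2 : M.mulVecLin (M.mulVecLin (e x)) = (M * M).mulVecLin (e x) := by
      rw [Matrix.mulVecLin_mul]; rfl
    rw [h2, hM]
  have key := aux_key P.toEuclideanLin Q.toEuclideanLin
    (Matrix.isHermitian_iff_isSymmetric.mp hPh) (Matrix.isHermitian_iff_isSymmetric.mp hQh)
    (hidem P hP2) (hidem Q hQ2)
  have hsub : P.toEuclideanLin - Q.toEuclideanLin = (P - Q).toEuclideanLin := (map_sub _ _ _).symm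
  rw [hsub] at key
  rw [← hrank, ← hrank, ← hrank, hinf, hPr, hQr] at key
  have hle : finrank ℂ ↥(LinearMap.range P.mulVecLin ⊓ LinearMap.range Q.mulVecLin) ≤ n := by
    calc finrank ℂ ↥(LinearMap.range P.mulVecLin ⊓ LinearMap.range Q.mulVecLin)
        ≤ finrank ℂ (LinearMap.range P.mulVecLin) := Submodule.finrank_mono inf_le_left
      _ = n := hPr
  omega
end

section
/- Every rank-one projection on a finite-dimensional complex Hilbert space of dimension greater than n can be written as a real-linear combination of n+1 projections of rank n; moreover, in any such combination p = Σ_{j=1}^{n+1} t_j P_j with P_j rank-n projections and t_j real, one has Σ_{j=1}^{n+1} t_j = 1/n. -/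
open Matrix
open scoped BigOperators

namespace RankOneProjAux

variable {d : ℕ}

lemma eig01 {A : Matrix (Fin d) (Fin d) ℂ} (hA : A.IsHermitian) (hid : A * A = A) :
    ∀ i, hA.eigenvalues i = 0 ∨ hA.eigenvalues i = 1 := by
  intro i
  have hUstar := Matrix.mem_unitaryGroup_iff.mp hA.eigenvectorUnitary.2
  have hD : star (hA.eigenvectorUnitary : Matrix (Fin d) (Fin d) ℂ) * A * (hA.eigenvectorUnitary : Matrix (Fin d) (Fin d) ℂ) = diagonal (RCLike.ofReal ∘ hA.eigenvalues) := by
    simpa [Unitary.conjStarAlgAut_star_apply] using hA.conjStarAlgAut_star_eigenvectorUnitary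
  set U : Matrix (Fin d) (Fin d) ℂ := (hA.eigenvectorUnitary : Matrix (Fin d) (Fin d) ℂ) with hUdef
  have hDD : (diagonal (RCLike.ofReal ∘ hA.eigenvalues) : Matrix (Fin d) (Fin d) ℂ)
        * diagonal (RCLike.ofReal ∘ hA.eigenvalues)
      = diagonal (RCLike.ofReal ∘ hA.eigenvalues) := by
    rw [← hD]
    calc (star U * A * U) * (star U * A * U)
        = star U * A * (U * star U) * (A * U) := by simp only [mul_assoc]
      _ = star U * (A * A) * U := by rw [hUstar, mul_one]; simp only [mul_assoc]
      _ = star U * A * U := by rw [hid]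
  rw [diagonal_mul_diagonal] at hDD
  have h := congrFun (Matrix.diagonal_injective hDD) i
  simp only [Pi.mul_apply, Function.comp_apply] at h
  have h' : hA.eigenvalues i * hA.eigenvalues i = hA.eigenvalues i := by
    have : ((hA.eigenvalues i * hA.eigenvalues i : ℝ) : ℂ) = ((hA.eigenvalues i : ℝ) : ℂ) := by
      push_cast; exact_mod_cast h
    exact_mod_cast this
  have h2 : hA.eigenvalues i * (hA.eigenvalues i - 1) = 0 := by ring_nf; linear_combination h'
  rcases mul_eq_zero.mp h2 with h3 | h3
  · exact Or.inl h3
  · exact Or.inr (by linarith [sub_eq_zero.mp h3])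

lemma trace_eq_rank {A : Matrix (Fin d) (Fin d) ℂ} (hA : A.IsHermitian) (hid : A * A = A) :
    A.trace = (A.rank : ℂ) := by
  classical
  have h01 := eig01 hA hid
  set U : Matrix (Fin d) (Fin d) ℂ := (hA.eigenvectorUnitary : Matrix (Fin d) (Fin d) ℂ) with hUdef
  have hT : A.trace = ∑ i, ((hA.eigenvalues i : ℝ) : ℂ) := by
    conv_lhs => rw [hA.spectral_theorem, Unitary.conjStarAlgAut_apply]
    rw [Matrix.trace_mul_cycle,
      Matrix.mem_unitaryGroup_iff'.mp hA.eigenvectorUnitary.2, one_mul, trace_diagonal]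
    simp [Function.comp]
  have hR : A.rank = Fintype.card {i // hA.eigenvalues i ≠ 0} := hA.rank_eq_card_non_zero_eigs
  rw [hT, hR, Fintype.card_subtype]
  rw [show (∑ i, ((hA.eigenvalues i : ℝ) : ℂ))
      = ∑ i, (if hA.eigenvalues i ≠ 0 then (1 : ℂ) else 0) from
    Finset.sum_congr rfl fun i _ => by
      rcases h01 i with h | h <;> simp [h]]
  rw [Finset.sum_boole]

lemma conj_unitary {U : Matrix (Fin d) (Fin d) ℂ} (hU : U ∈ Matrix.unitaryGroup (Fin d) ℂ)
    {Q : Matrix (Fin d) (Fin d) ℂ} (hQ : Q.IsHermitian) (hid : Q * Q = Q) :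
    (U * Q * star U).IsHermitian ∧ (U * Q * star U) * (U * Q * star U) = U * Q * star U ∧
      (U * Q * star U).rank = Q.rank := by
  have hUstar : star U * U = 1 := Matrix.mem_unitaryGroup_iff'.mp hU
  have hdetU : IsUnit U.det := Matrix.UnitaryGroup.det_isUnit ⟨U, hU⟩
  have hdetsU : IsUnit (star U).det := by
    rw [Matrix.star_eq_conjTranspose, Matrix.det_conjTranspose]
    exact hdetU.star
  refine ⟨?_, ?_, ?_⟩
  · have hQs : star Q = Q := by rw [Matrix.star_eq_conjTranspose, hQ.eq]
    show (U * Q * star U)ᴴ = U * Q * star U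
    rw [← Matrix.star_eq_conjTranspose]
    simp only [Matrix.star_mul, star_star, hQs, mul_assoc]
  · calc (U * Q * star U) * (U * Q * star U)
        = U * Q * (star U * U) * (Q * star U) := by simp only [mul_assoc]
      _ = U * (Q * Q) * star U := by rw [hUstar, mul_one]; simp only [mul_assoc]
      _ = U * Q * star U := by rw [hid]
  · rw [Matrix.rank_mul_eq_left_of_isUnit_det _ _ hdetsU,
      Matrix.rank_mul_eq_right_of_isUnit_det _ _ hdetU]

end RankOneProjAux

open RankOneProjAux

theorem rank_one_proj_real_combination_of_rank_n
    {d n : ℕ} (hn : 1 ≤ n) (hd : n < d) :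
    -- existence of a real-linear combination
    (∀ p : Matrix (Fin d) (Fin d) ℂ,
      (p.IsHermitian ∧ p * p = p ∧ p.rank = 1) →
      ∃ (t : Fin (n + 1) → ℝ) (P : Fin (n + 1) → Matrix (Fin d) (Fin d) ℂ),
        (∀ j, (P j).IsHermitian ∧ P j * P j = P j ∧ (P j).rank = n) ∧
        p = ∑ j, (t j : ℂ) • P j)
    ∧
    -- in any such combination the coefficients sum to 1/n
    (∀ p : Matrix (Fin d) (Fin d) ℂ,
      (p.IsHermitian ∧ p * p = p ∧ p.rank = 1) →
      ∀ (t : Fin (n + 1) → ℝ) (P : Fin (n + 1) → Matrix (Fin d) (Fin d) ℂ),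
        (∀ j, (P j).IsHermitian ∧ P j * P j = P j ∧ (P j).rank = n) →
        p = ∑ j, (t j : ℂ) • P j →
        ∑ j, t j = 1 / n) := by
  have hn0R : (n : ℝ) ≠ 0 := Nat.cast_ne_zero.mpr (by omega)
  have hn0C : (n : ℂ) ≠ 0 := Nat.cast_ne_zero.mpr (by omega)
  constructor
  · -- existence
    rintro p ⟨hph, hpp, hpr⟩
    classical
    set w := hph.eigenvalues with hw
    set U : Matrix (Fin d) (Fin d) ℂ := (hph.eigenvectorUnitary : Matrix (Fin d) (Fin d) ℂ) with hUdef
    have h01 := eig01 hph hpp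
    have hcard : Fintype.card {i // w i ≠ 0} = 1 := by
      rw [← hph.rank_eq_card_non_zero_eigs, hpr]
    obtain ⟨⟨i0, hi0⟩, huniq⟩ := Fintype.card_eq_one_iff.mp hcard
    have hwi0 : w i0 = 1 := (h01 i0).resolve_left hi0
    have hwzero : ∀ i, i ≠ i0 → w i = 0 := by
      intro i hi
      by_contra h
      exact hi (congrArg Subtype.val (huniq ⟨i, h⟩))
    have hle : n + 1 ≤ d := hd
    set g : Fin (n + 1) → Fin d :=
      fun k => Equiv.swap i0 (Fin.castLE hle 0) (Fin.castLE hle k) with hgdef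
    have hginj : Function.Injective g :=
      (Equiv.injective _).comp (Fin.castLE_injective hle)
    have hg0 : g 0 = i0 := by simp [hgdef, Equiv.swap_apply_right]
    set S : Fin (n + 1) → Fin d → ℂ :=
      fun j i => if ∃ k, k ≠ j ∧ g k = i then 1 else 0 with hSdef
    set P : Fin (n + 1) → Matrix (Fin d) (Fin d) ℂ :=
      fun j => U * diagonal (S j) * star U with hPdef
    set t : Fin (n + 1) → ℝ := fun k => if k = 0 then 1 / n - 1 else 1 / n with htdef
    -- diagonal Q's are hermitian idempotent of rank n
    have hSstar : ∀ j, star (S j) = S j := by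
      intro j
      funext i
      simp only [hSdef, Pi.star_apply]
      split <;> simp
    have hSmul : ∀ j, S j * S j = S j := by
      intro j
      funext i
      simp only [hSdef, Pi.mul_apply]
      split <;> simp
    have hSherm : ∀ j, (diagonal (S j)).IsHermitian := by
      intro j
      show (diagonal (S j))ᴴ = diagonal (S j)
      rw [diagonal_conjTranspose, hSstar j]
    have hSid : ∀ j, diagonal (S j) * diagonal (S j) = diagonal (S j) := by
      intro j
      rw [diagonal_mul_diagonal]
      exact congrArg diagonal (hSmul j)
    have hSrank : ∀ j, (diagonal (S j)).rank = n := by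
      intro j
      rw [Matrix.rank_diagonal]
      have e : {k : Fin (n + 1) // k ≠ j} ≃ {i : Fin d // S j i ≠ 0} := by
        refine Equiv.ofBijective (fun k => ⟨g k.1, ?_⟩) ⟨?_, ?_⟩
        · simp only [hSdef]
          rw [if_pos ⟨k.1, k.2, rfl⟩]
          exact one_ne_zero
        · intro a b hab
          exact Subtype.ext (hginj (congrArg Subtype.val hab))
        · rintro ⟨i, hi⟩
          simp only [hSdef] at hi
          by_cases hc : ∃ k, k ≠ j ∧ g k = i
          · obtain ⟨k, hk, hgk⟩ := hc
            exact ⟨⟨k, hk⟩, Subtype.ext hgk⟩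
          · rw [if_neg hc] at hi; exact absurd rfl hi
      rw [← Fintype.card_congr e]
      have h1 : Fintype.card {k : Fin (n + 1) // ¬(k = j)}
          = Fintype.card (Fin (n + 1)) - Fintype.card {k : Fin (n + 1) // k = j} :=
        Fintype.card_subtype_compl _
      rw [Fintype.card_subtype_eq, Fintype.card_fin] at h1
      simp only [Nat.add_sub_cancel] at h1
      exact h1
    -- total sum of coefficients
    have hTR : ∑ j, t j = 1 / n := by
      rw [Fin.sum_univ_succ]
      have h1 : ∀ i : Fin n, t i.succ = 1 / n := fun i => if_neg (Fin.succ_ne_zero i)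
      rw [Finset.sum_congr rfl (fun i _ => h1 i), Finset.sum_const, Finset.card_univ,
        Fintype.card_fin, nsmul_eq_mul]
      have ht0 : t 0 = 1 / n - 1 := if_pos rfl
      rw [ht0]
      field_simp
      ring
    have hT : ∑ j, (t j : ℂ) = 1 / n := by
      rw [← Complex.ofReal_sum, hTR]
      push_cast
      ring
    -- the key diagonal sum identity
    set e0 : Fin d → ℂ := fun i => if i = i0 then 1 else 0 with he0def
    have hsumdiag : ∑ j, (t j : ℂ) • diagonal (S j) = diagonal e0 := by
      ext i i'
      rw [Matrix.sum_apply]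
      by_cases hii : i = i'
      · subst hii
        simp only [Matrix.smul_apply, diagonal_apply_eq, smul_eq_mul]
        by_cases hir : ∃ k, g k = i
        · obtain ⟨k, rfl⟩ := hir
          have hS : ∀ j, S j (g k) = if j = k then 0 else 1 := by
            intro j
            by_cases hjk : j = k
            · subst hjk
              have hno : ¬ ∃ k', k' ≠ j ∧ g k' = g j := by
                rintro ⟨k', hk', hgk'⟩
                exact hk' (hginj hgk')
              simp [hSdef, hno]
            · have hex : ∃ k', k' ≠ j ∧ g k' = g k := ⟨k, Ne.symm hjk, rfl⟩
              simp [hSdef, hex, hjk]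
          have step1 : ∑ j, (t j : ℂ) * S j (g k)
              = ∑ j, (if j = k then 0 else (t j : ℂ)) := by
            refine Finset.sum_congr rfl fun j _ => ?_
            rw [hS j]
            split <;> simp
          have step2 : ∑ j, (if j = k then 0 else (t j : ℂ))
              = (∑ j, (t j : ℂ)) - t k := by
            rw [← Finset.sum_erase (Finset.univ) (f := fun j => if j = k then 0 else (t j : ℂ))
              (if_pos rfl)]
            rw [Finset.sum_congr rfl (fun j hj => if_neg (Finset.ne_of_mem_erase hj)),
              Finset.sum_erase_eq_sub (Finset.mem_univ k)]
          rw [step1, step2, hT]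
          by_cases hk0 : k = 0
          · subst hk0
            rw [hg0, he0def]
            simp only [if_pos rfl]
            have : t 0 = 1 / n - 1 := if_pos rfl
            rw [this]
            push_cast
            ring
          · have hgk : g k ≠ i0 := by
              rw [← hg0]
              exact fun h => hk0 (hginj h)
            rw [he0def]
            simp only [if_neg hgk]
            have : t k = 1 / n := if_neg hk0
            rw [this]
            push_cast
            ring
        · have hS0 : ∀ j, S j i = 0 := by
            intro j
            simp only [hSdef]
            rw [if_neg]
            rintro ⟨k', _, hgk'⟩
            exact hir ⟨k', hgk'⟩
          have he00 : e0 i = 0 := by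
            rw [he0def]
            simp only
            rw [if_neg]
            intro h
            exact hir ⟨0, by rw [hg0, h]⟩
          rw [he00]
          refine Finset.sum_eq_zero fun j _ => ?_
          rw [hS0 j, mul_zero]
      · simp only [Matrix.smul_apply, diagonal_apply_ne _ hii, smul_eq_mul, mul_zero]
        rw [Finset.sum_const_zero]
    -- final assembly
    refine ⟨t, P, fun j => ?_, ?_⟩
    · obtain ⟨h1, h2, h3⟩ := conj_unitary hph.eigenvectorUnitary.2 (hSherm j) (hSid j)
      exact ⟨h1, h2, by rw [hPdef]; simpa [hSrank j] using h3⟩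
    · have hdiag : (RCLike.ofReal ∘ w : Fin d → ℂ) = e0 := by
        funext i
        by_cases hi : i = i0
        · subst hi
          simp [he0def, hwi0]
        · simp [he0def, hi, hwzero i hi]
      have hspec : p = U * diagonal e0 * star U := by
        conv_lhs => rw [hph.spectral_theorem, Unitary.conjStarAlgAut_apply]
        rw [hdiag]
      rw [hspec, ← hsumdiag, Finset.mul_sum, Finset.sum_mul]
      refine Finset.sum_congr rfl fun j _ => ?_
      rw [mul_smul_comm, smul_mul_assoc]
  · -- trace argument
    rintro p ⟨hph, hpp, hpr⟩ t P hP hsum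
    have htrp : p.trace = 1 := by
      rw [trace_eq_rank hph hpp, hpr]; norm_num
    have htrP : ∀ j, (P j).trace = n := fun j => by
      rw [trace_eq_rank (hP j).1 (hP j).2.1, (hP j).2.2]
    have hC : (1 : ℂ) = (∑ j, t j : ℝ) * n := by
      have h := congrArg Matrix.trace hsum
      rw [htrp, Matrix.trace_sum] at h
      have h2 : ∑ j, ((t j : ℂ) • P j).trace = ∑ j, (t j : ℂ) * n := by
        refine Finset.sum_congr rfl fun j _ => ?_
        rw [Matrix.trace_smul, htrP j, smul_eq_mul]
      rw [h2, ← Finset.sum_mul, ← Complex.ofReal_sum] at h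
      exact h
    have hR : (∑ j, t j) * n = 1 := by exact_mod_cast hC.symm
    field_simp
    linarith
end

section
/- Let P, Q be rank-n projections on H, let R be a rank-n projection with P + Q − R also a rank-n projection. If x ∈ range P ∩ range Q then x ∈ range R, and if x ∈ (ker P) ∩ (ker Q) then x ∈ ker R. -/
open Matrix

open scoped ComplexOrder in
lemma dp_zero {d : ℕ} (v : Fin d → ℂ) (h : star v ⬝ᵥ v = 0) : v = 0 :=
  dotProduct_star_self_eq_zero.mp h

lemma proj_dot {d : ℕ} (A : Matrix (Fin d) (Fin d) ℂ) (hA : A.IsHermitian)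
    (h2 : A * A = A) (x : Fin d → ℂ) :
    star (A.mulVec x) ⬝ᵥ A.mulVec x = star x ⬝ᵥ A.mulVec x := by
  rw [star_mulVec, hA.eq, ← dotProduct_mulVec, mulVec_mulVec, h2]

lemma herm_sym {d : ℕ} (A : Matrix (Fin d) (Fin d) ℂ) (hA : A.IsHermitian)
    (x : Fin d → ℂ) :
    star (A.mulVec x) ⬝ᵥ x = star x ⬝ᵥ A.mulVec x := by
  rw [star_mulVec, hA.eq, ← dotProduct_mulVec]

theorem mem_range_and_ker_of_sum_proj
    {d n : ℕ} (P Q R : Matrix (Fin d) (Fin d) ℂ)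
    (hP : P.IsHermitian ∧ P * P = P ∧ P.rank = n)
    (hQ : Q.IsHermitian ∧ Q * Q = Q ∧ Q.rank = n)
    (hR : R.IsHermitian ∧ R * R = R ∧ R.rank = n)
    (hS : (P + Q - R).IsHermitian ∧ (P + Q - R) * (P + Q - R) = P + Q - R ∧
      (P + Q - R).rank = n) :
    (∀ x : Fin d → ℂ, P.mulVec x = x → Q.mulVec x = x → R.mulVec x = x)
    ∧
    (∀ x : Fin d → ℂ, P.mulVec x = 0 → Q.mulVec x = 0 → R.mulVec x = 0) := by
  constructor
  · intro x hPx hQx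
    set y := R.mulVec x with hy
    have hSx : (P + Q - R).mulVec x = x + x - y := by
      rw [sub_mulVec, add_mulVec, hPx, hQx]
    have h1 : star y ⬝ᵥ y = star x ⬝ᵥ y := proj_dot R hR.1 hR.2.1 x
    have h1' : star y ⬝ᵥ x = star x ⬝ᵥ y := herm_sym R hR.1 x
    have h2 : star (x + x - y) ⬝ᵥ (x + x - y) = star x ⬝ᵥ (x + x - y) := by
      rw [← hSx]; exact proj_dot _ hS.1 hS.2.1 x
    simp only [star_add, star_sub, add_dotProduct, sub_dotProduct,
      dotProduct_add, dotProduct_sub] at h2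
    have ht : star x ⬝ᵥ y = star x ⬝ᵥ x := by
      linear_combination (-1/2 : ℂ) * h2 + (1/2 : ℂ) * h1 - h1'
    have hz : star (x - y) ⬝ᵥ (x - y) = 0 := by
      simp only [star_sub, sub_dotProduct, dotProduct_sub]
      linear_combination h1 - h1' - ht
    have := dp_zero _ hz
    rw [sub_eq_zero] at this
    exact this.symm
  · intro x hPx hQx
    set y := R.mulVec x with hy
    have hSx : (P + Q - R).mulVec x = -y := by
      rw [sub_mulVec, add_mulVec, hPx, hQx]; simp [hy]
    have h1 : star y ⬝ᵥ y = star x ⬝ᵥ y := proj_dot R hR.1 hR.2.1 x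
    have h2 : star (-y) ⬝ᵥ (-y) = star x ⬝ᵥ (-y) := by
      rw [← hSx]; exact proj_dot _ hS.1 hS.2.1 x
    simp only [star_neg, neg_dotProduct, dotProduct_neg, neg_neg] at h2
    have hz : star y ⬝ᵥ y = 0 := by linear_combination (h1 + h2) / 2
    exact dp_zero _ hz
end

section
/- Let p and q be distinct rank-one projections on a two-dimensional complex Hilbert space with p + q invertible (equivalently p + q ≠ I and p ≠ q). Then a rank-one projection r satisfies that p + q − r is a rank-one projection if and only if tr((p+q)^{-1} r) = 1. -/
open Matrix

private lemma rank_one_iff' (M : Matrix (Fin 2) (Fin 2) ℂ) :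
    M.rank = 1 ↔ M ≠ 0 ∧ M.det = 0 := by
  constructor
  · intro h
    refine ⟨?_, ?_⟩
    · rintro rfl; simp [Matrix.rank_zero] at h
    · by_contra hd
      have hu : IsUnit M := (Matrix.isUnit_iff_isUnit_det M).mpr (isUnit_iff_ne_zero.mpr hd)
      have := Matrix.rank_of_isUnit M hu
      rw [h] at this
      simp [Fintype.card_fin] at this
  · rintro ⟨hM0, hd⟩
    have hrn : M.rank + Module.finrank ℂ (LinearMap.ker M.mulVecLin) = 2 := by
      have h2 := LinearMap.finrank_range_add_finrank_ker M.mulVecLin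
      simpa [Matrix.rank] using h2
    have hker : LinearMap.ker M.mulVecLin ≠ ⊥ := by
      obtain ⟨v, hv, hv0⟩ := (Matrix.exists_mulVec_eq_zero_iff).mpr hd
      intro hb
      have : v ∈ LinearMap.ker M.mulVecLin := by simp [LinearMap.mem_ker, Matrix.mulVecLin_apply, hv0]
      rw [hb] at this
      exact hv (by simpa using this)
    have hker1 : 1 ≤ Module.finrank ℂ (LinearMap.ker M.mulVecLin) := by
      rcases Nat.eq_zero_or_pos (Module.finrank ℂ (LinearMap.ker M.mulVecLin)) with h0 | h1
      · exact absurd (Submodule.finrank_eq_zero.mp h0) hker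
      · exact h1
    have hne0 : M.rank ≠ 0 := by
      intro h0
      have hbot : LinearMap.range M.mulVecLin = ⊥ := Submodule.finrank_eq_zero.mp h0
      have hz : M.mulVecLin = 0 := LinearMap.range_eq_bot.mp hbot
      apply hM0
      ext i j
      have := congrFun (congrArg DFunLike.coe hz) (Pi.single j 1)
      have h2 : M.mulVec (Pi.single j 1) = 0 := this
      have := congrFun h2 i
      simpa [Matrix.mulVec_single_one] using this
    omega

private lemma idem_of_trace_det (M : Matrix (Fin 2) (Fin 2) ℂ)
    (ht : M.trace = 1) (hd : M.det = 0) : M * M = M := by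
  rw [Matrix.trace_fin_two] at ht
  rw [Matrix.det_fin_two] at hd
  ext i j
  fin_cases i <;> fin_cases j <;>
    simp only [Matrix.mul_apply, Fin.sum_univ_two, Fin.mk_zero, Fin.mk_one, Fin.isValue] <;>
  [ (linear_combination M 0 0 * ht - hd);
    (linear_combination M 0 1 * ht);
    (linear_combination M 1 0 * ht);
    (linear_combination M 1 1 * ht - hd) ]

private lemma trace_det_of_proj (M : Matrix (Fin 2) (Fin 2) ℂ)
    (hM : M * M = M) (hr : M.rank = 1) : M.trace = 1 ∧ M.det = 0 := by
  obtain ⟨hM0, hd⟩ := (rank_one_iff' M).mp hr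
  refine ⟨?_, hd⟩
  rw [Matrix.det_fin_two] at hd
  have e00 := congrFun (congrFun hM 0) 0
  have e01 := congrFun (congrFun hM 0) 1
  have e10 := congrFun (congrFun hM 1) 0
  have e11 := congrFun (congrFun hM 1) 1
  simp only [Matrix.mul_apply, Fin.sum_univ_two] at e00 e01 e10 e11
  rw [Matrix.trace_fin_two]
  by_contra ht
  have h1 : M 0 0 + M 1 1 - 1 ≠ 0 := fun h => ht (by linear_combination h)
  have ha : M 0 0 = 0 := by
    have : M 0 0 * (M 0 0 + M 1 1 - 1) = 0 := by linear_combination e00 + hd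
    exact (mul_eq_zero.mp this).resolve_right h1
  have hdd : M 1 1 = 0 := by
    have : M 1 1 * (M 0 0 + M 1 1 - 1) = 0 := by linear_combination e11 + hd
    exact (mul_eq_zero.mp this).resolve_right h1
  have hb : M 0 1 = 0 := by
    have : M 0 1 * (M 0 0 + M 1 1 - 1) = 0 := by linear_combination e01
    exact (mul_eq_zero.mp this).resolve_right h1
  have hc : M 1 0 = 0 := by
    have : M 1 0 * (M 0 0 + M 1 1 - 1) = 0 := by linear_combination e10
    exact (mul_eq_zero.mp this).resolve_right h1
  apply hM0
  ext i j
  fin_cases i <;> fin_cases j <;> simp [ha, hb, hc, hdd]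

private lemma trace_adj_mul (B r : Matrix (Fin 2) (Fin 2) ℂ) :
    (B.adjugate * r).trace = B.det + r.det - (B - r).det := by
  rw [Matrix.adjugate_fin_two]
  simp [Matrix.trace_fin_two, Matrix.det_fin_two, Matrix.mul_apply, Fin.sum_univ_two,
    Matrix.sub_apply, Matrix.vecMul, dotProduct]
  ring

theorem sub_proj_iff_trace_inv_mul_eq_one
    (p q : Matrix (Fin 2) (Fin 2) ℂ)
    (hp : p.IsHermitian ∧ p * p = p ∧ p.rank = 1)
    (hq : q.IsHermitian ∧ q * q = q ∧ q.rank = 1)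
    (hne : p ≠ q) (hinv : IsUnit (p + q)) :
    ∀ r : Matrix (Fin 2) (Fin 2) ℂ,
      (r.IsHermitian ∧ r * r = r ∧ r.rank = 1) →
      (((p + q - r).IsHermitian ∧ (p + q - r) * (p + q - r) = p + q - r ∧
          (p + q - r).rank = 1)
        ↔ ((p + q)⁻¹ * r).trace = 1) := by
  rintro r ⟨hrh, hrr, hrrank⟩
  obtain ⟨hph, hpp, hprank⟩ := hp
  obtain ⟨hqh, hqq, hqrank⟩ := hq
  have hdB : (p + q).det ≠ 0 := by
    have := (Matrix.isUnit_iff_isUnit_det _).mp hinv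
    exact this.ne_zero
  obtain ⟨htp, hdp⟩ := trace_det_of_proj p hpp hprank
  obtain ⟨htq, hdq⟩ := trace_det_of_proj q hqq hqrank
  obtain ⟨htr, hdr⟩ := trace_det_of_proj r hrr hrrank
  have htA : (p + q - r).trace = 1 := by
    rw [Matrix.trace_sub, Matrix.trace_add, htp, htq, htr]; ring
  have hkey : ((p + q)⁻¹ * r).trace = ((p + q).det)⁻¹ * ((p + q).det - (p + q - r).det) := by
    rw [Matrix.inv_def, Matrix.smul_mul, Matrix.trace_smul, trace_adj_mul, hdr,
      Ring.inverse_eq_inv]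
    simp only [smul_eq_mul]
    ring
  constructor
  · rintro ⟨-, -, hArank⟩
    obtain ⟨-, hdA⟩ := (rank_one_iff' _).mp hArank
    rw [hkey, hdA, sub_zero]
    field_simp
  · intro htr1
    rw [hkey] at htr1
    have hdA : (p + q - r).det = 0 := by
      field_simp at htr1
      linear_combination -htr1
    refine ⟨(hph.add hqh).sub hrh, idem_of_trace_det _ htA hdA, (rank_one_iff' _).mpr ⟨?_, hdA⟩⟩
    intro h0
    rw [h0, Matrix.trace_zero] at htA
    exact one_ne_zero htA.symm
end

section
/- Let s ∈ (0,1) and let D be the 2×2 diagonal matrix diag(s, 2−s). Then a 2×2 Hermitian matrix A of rank one satisfies tr A = 1 and tr(D^{-1}A) = 1 if and only if A = [[s/2, (√((2−s)s)/2)e^{it}],[(√((2−s)s)/2)e^{−it}, (2−s)/2]] for some real t. -/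
open Matrix Complex

theorem hermitian_rank_one_trace_conditions
    (s : ℝ) (hs : 0 < s) (hs1 : s < 1)
    (A : Matrix (Fin 2) (Fin 2) ℂ)
    (hA : A.IsHermitian) (hrk : A.rank = 1) :
    (A.trace = 1 ∧ ((Matrix.diagonal ![(s : ℂ), (2 - s : ℂ)])⁻¹ * A).trace = 1)
    ↔ ∃ t : ℝ,
        A = !![((s / 2 : ℝ) : ℂ),
               ((Real.sqrt ((2 - s) * s) / 2 : ℝ) : ℂ) * Complex.exp (t * Complex.I);
               ((Real.sqrt ((2 - s) * s) / 2 : ℝ) : ℂ) * Complex.exp (-(t * Complex.I)),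
               (((2 - s) / 2 : ℝ) : ℂ)] := by
  have hs0 : (s : ℂ) ≠ 0 := by exact_mod_cast hs.ne'
  have hs2 : ((2 : ℂ) - s) ≠ 0 := by
    intro h
    have : (2 - s : ℝ) = 0 := by exact_mod_cast h
    linarith
  have hinv : (Matrix.diagonal ![(s : ℂ), (2 - s : ℂ)])⁻¹
      = Matrix.diagonal ![(s : ℂ)⁻¹, ((2 : ℂ) - s)⁻¹] := by
    refine Matrix.inv_eq_right_inv ?_
    rw [Matrix.diagonal_mul_diagonal]
    ext i j
    fin_cases i <;> fin_cases j <;>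
      simp [Matrix.diagonal, mul_inv_cancel₀ hs0, mul_inv_cancel₀ hs2]
  have htr : ∀ B : Matrix (Fin 2) (Fin 2) ℂ,
      (Matrix.diagonal ![(s : ℂ)⁻¹, ((2 : ℂ) - s)⁻¹] * B).trace
        = (s : ℂ)⁻¹ * B 0 0 + ((2 : ℂ) - s)⁻¹ * B 1 1 := by
    intro B
    rw [Matrix.trace_fin_two]
    simp [Matrix.diagonal_mul]
  constructor
  · rintro ⟨h1, h2⟩
    rw [Matrix.trace_fin_two] at h1
    rw [hinv, htr] at h2
    have h2' : ((2 : ℂ) - s) * A 0 0 + s * A 1 1 = s * ((2 : ℂ) - s) := by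
      field_simp at h2
      linear_combination h2
    have hden : ((2 : ℂ) - 2 * s) ≠ 0 := by
      intro h
      have : (2 - 2 * s : ℝ) = 0 := by exact_mod_cast h
      linarith
    have hkey : ((2 : ℂ) - 2 * s) * A 0 0 = ((2 : ℂ) - 2 * s) * ((s : ℂ) / 2) := by
      linear_combination h2' - (s : ℂ) * h1
    have h00 : A 0 0 = (s : ℂ) / 2 := mul_left_cancel₀ hden hkey
    have h11 : A 1 1 = ((2 : ℂ) - s) / 2 := by linear_combination h1 - h00
    -- determinant is zero since rank < 2
    have hdet : A.det = 0 := by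
      by_contra hd
      have := Matrix.rank_of_isUnit A ((Matrix.isUnit_iff_isUnit_det A).mpr (Ne.isUnit hd))
      simp [Fintype.card_fin] at this
      omega
    have h10 : A 1 0 = (starRingEnd ℂ) (A 0 1) := (hA.apply 1 0).symm
    rw [Matrix.det_fin_two, h00, h11, h10] at hdet
    have hns : (Complex.normSq (A 0 1) : ℂ) = ((2 : ℂ) - s) * s / 4 := by
      rw [← Complex.mul_conj]
      linear_combination -hdet
    have hnsR : Complex.normSq (A 0 1) = (2 - s) * s / 4 := by
      exact_mod_cast hns
    have habs : ‖A 0 1‖ = Real.sqrt ((2 - s) * s) / 2 := by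
      rw [Complex.norm_def, hnsR, show ((2 - s) * s / 4 : ℝ) = ((2 - s) * s) * (1 / 2) ^ 2 by
        ring, Real.sqrt_mul (by nlinarith : (0 : ℝ) ≤ (2 - s) * s),
        Real.sqrt_sq (by norm_num : (0 : ℝ) ≤ 1 / 2)]
      ring
    refine ⟨Complex.arg (A 0 1), ?_⟩
    set t : ℝ := Complex.arg (A 0 1) with htdef
    have h01 : A 0 1 = ((Real.sqrt ((2 - s) * s) / 2 : ℝ) : ℂ)
        * Complex.exp ((t : ℂ) * Complex.I) := by
      rw [← habs, htdef, Complex.norm_mul_exp_arg_mul_I]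
    have h10' : A 1 0 = ((Real.sqrt ((2 - s) * s) / 2 : ℝ) : ℂ)
        * Complex.exp (-((t : ℂ) * Complex.I)) := by
      have hc := congrArg (starRingEnd ℂ) h01
      rw [h10, hc, _root_.map_mul, ← Complex.exp_conj]
      simp [Complex.conj_ofReal, map_ofNat]
    ext i j
    fin_cases i <;> fin_cases j <;>
      simp [h00, h11, h01, h10']
  · rintro ⟨t, rfl⟩
    constructor
    · rw [Matrix.trace_fin_two]
      push_cast
      simp
      try ring
    · rw [hinv, htr]
      simp only [Matrix.cons_val', Matrix.cons_val_zero, Matrix.cons_val_one, Matrix.head_cons,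
        Matrix.of_apply, Matrix.head_fin_const]
      field_simp
      try push_cast
      try ring
end

section
/- Suppose dim H > 2n and φ is a transition-probability-preserving map on rank-n projections with a real-linear trace-form-preserving extension Φ on self-adjoint operators. If P, Q are orthogonal rank-n projections then φ(P) and φ(Q) are orthogonal, and for every rank-n projection R with R ≤ P + Q one has φ(R) ≤ φ(P) + φ(Q). -/
open Matrix

lemma trace_conjTranspose_mul_self_eq_zero' {d : ℕ} {A : Matrix (Fin d) (Fin d) ℂ}
    (h : (Aᴴ * A).trace = 0) : A = 0 := by
  have ht : (Aᴴ * A).trace = ((∑ j, ∑ i, Complex.normSq (A i j) : ℝ) : ℂ) := by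
    simp only [Matrix.trace, Matrix.diag, Matrix.mul_apply, Matrix.conjTranspose_apply]
    push_cast
    refine Finset.sum_congr rfl fun j _ => Finset.sum_congr rfl fun i _ => ?_
    rw [Complex.normSq_eq_conj_mul_self]
    rfl
  rw [ht, Complex.ofReal_eq_zero] at h
  have h2 := (Finset.sum_eq_zero_iff_of_nonneg
    (fun j _ => Finset.sum_nonneg fun i _ => Complex.normSq_nonneg _)).mp h
  ext i j
  have hj := h2 j (Finset.mem_univ j)
  have hij := (Finset.sum_eq_zero_iff_of_nonneg
    (fun i _ => Complex.normSq_nonneg _)).mp hj i (Finset.mem_univ i)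
  simpa using Complex.normSq_eq_zero.mp hij

theorem phi_preserves_orthogonality_and_order
    {d n : ℕ} (hn : 2 ≤ n) (hd : 2 * n < d)
    (φ Φ : Matrix (Fin d) (Fin d) ℂ → Matrix (Fin d) (Fin d) ℂ)
    (hφ : ∀ P : Matrix (Fin d) (Fin d) ℂ,
      (P.IsHermitian ∧ P * P = P ∧ P.rank = n) →
      ((φ P).IsHermitian ∧ φ P * φ P = φ P ∧ (φ P).rank = n))
    (htrφ : ∀ P Q : Matrix (Fin d) (Fin d) ℂ,
      (P.IsHermitian ∧ P * P = P ∧ P.rank = n) →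
      (Q.IsHermitian ∧ Q * Q = Q ∧ Q.rank = n) →
      (φ P * φ Q).trace = (P * Q).trace)
    -- Φ is a real-linear extension of φ to self-adjoint operators
    (hext : ∀ P : Matrix (Fin d) (Fin d) ℂ,
      (P.IsHermitian ∧ P * P = P ∧ P.rank = n) → Φ P = φ P)
    (hherm : ∀ A : Matrix (Fin d) (Fin d) ℂ, A.IsHermitian → (Φ A).IsHermitian)
    (hadd : ∀ A B : Matrix (Fin d) (Fin d) ℂ, A.IsHermitian → B.IsHermitian →
      Φ (A + B) = Φ A + Φ B)
    (hsmul : ∀ (r : ℝ) (A : Matrix (Fin d) (Fin d) ℂ), A.IsHermitian →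
      Φ ((r : ℂ) • A) = (r : ℂ) • Φ A)
    (hinj : ∀ A B : Matrix (Fin d) (Fin d) ℂ, A.IsHermitian → B.IsHermitian →
      Φ A = Φ B → A = B)
    (htrΦ : ∀ A B : Matrix (Fin d) (Fin d) ℂ, A.IsHermitian → B.IsHermitian →
      (Φ A * Φ B).trace = (A * B).trace) :
    ∀ P Q : Matrix (Fin d) (Fin d) ℂ,
      (P.IsHermitian ∧ P * P = P ∧ P.rank = n) →
      (Q.IsHermitian ∧ Q * Q = Q ∧ Q.rank = n) →
      P * Q = 0 →
      φ P * φ Q = 0 ∧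
      (∀ R : Matrix (Fin d) (Fin d) ℂ,
        (R.IsHermitian ∧ R * R = R ∧ R.rank = n) →
        (P + Q) * R = R → (φ P + φ Q) * φ R = φ R) := by
  intro P Q hP hQ hPQ
  obtain ⟨hAh, hAi, -⟩ := hφ P hP
  obtain ⟨hBh, hBi, -⟩ := hφ Q hQ
  have htr0 : (φ P * φ Q).trace = 0 := by
    rw [htrφ P Q hP hQ, hPQ, Matrix.trace_zero]
  -- first: φ Q * φ P = 0
  have hBA : φ Q * φ P = 0 := by
    apply trace_conjTranspose_mul_self_eq_zero'
    have hct : (φ Q * φ P)ᴴ = φ P * φ Q := by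
      rw [Matrix.conjTranspose_mul, hAh.eq, hBh.eq]
    rw [hct]
    have h2 : φ P * φ Q * (φ Q * φ P) = φ P * φ Q * φ P := by
      rw [mul_assoc, ← mul_assoc (φ Q), hBi, ← mul_assoc]
    rw [h2, Matrix.trace_mul_cycle, hAi, htr0]
  have hAB : φ P * φ Q = 0 := by
    have := congrArg Matrix.conjTranspose hBA
    rwa [Matrix.conjTranspose_mul, hAh.eq, hBh.eq, Matrix.conjTranspose_zero] at this
  refine ⟨hAB, fun R hR hRle => ?_⟩
  obtain ⟨hCh, hCi, -⟩ := hφ R hR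
  set E : Matrix (Fin d) (Fin d) ℂ := φ P + φ Q with hE
  have hEh : Eᴴ = E := by rw [hE, Matrix.conjTranspose_add, hAh.eq, hBh.eq]
  have hEi : E * E = E := by
    rw [hE, add_mul, mul_add, mul_add, hAi, hBi, hAB, hBA]
    abel
  -- trace of φR * E equals trace of R
  have htrRP : (φ R * φ P).trace = (R * P).trace := htrφ R P hR hP
  have htrRQ : (φ R * φ Q).trace = (R * Q).trace := htrφ R Q hR hQ
  have htrR : (φ R).trace = R.trace := by
    have := htrφ R R hR hR
    rwa [hCi, hR.2.1] at this
  have htrRE : (φ R * E).trace = (φ R).trace := by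
    have hsum : (R * P).trace + (R * Q).trace = R.trace := by
      have : R * (P + Q) = R := by
        have := congrArg Matrix.conjTranspose hRle
        rwa [Matrix.conjTranspose_mul, hR.1.eq, Matrix.conjTranspose_add,
          hP.1.eq, hQ.1.eq] at this
      calc (R * P).trace + (R * Q).trace = (R * P + R * Q).trace := by
            rw [Matrix.trace_add]
        _ = (R * (P + Q)).trace := by rw [mul_add]
        _ = R.trace := by rw [this]
    rw [hE, mul_add, Matrix.trace_add, htrRP, htrRQ, hsum, htrR]
  -- now show (1 - E) * φ R = 0
  have hM : (1 - E) * φ R = 0 := by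
    apply trace_conjTranspose_mul_self_eq_zero'
    have hct : ((1 - E) * φ R)ᴴ = φ R * (1 - E) := by
      rw [Matrix.conjTranspose_mul, hCh.eq, Matrix.conjTranspose_sub,
        Matrix.conjTranspose_one, hEh]
    rw [hct]
    have h1 : (1 - E) * ((1 - E) * φ R) = (1 - E) * φ R := by
      rw [← mul_assoc]
      congr 1
      rw [sub_mul, mul_sub, mul_sub, hEi, one_mul, mul_one, one_mul]
      abel
    rw [mul_assoc, h1, ← mul_assoc, Matrix.trace_mul_cycle, hCi,
      mul_sub, mul_one, Matrix.trace_sub, htrRE, sub_self]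
  have h3 : φ R - E * φ R = 0 := by rwa [sub_mul, one_mul] at hM
  have hfin : E * φ R = φ R := (sub_eq_zero.mp h3).symm
  simpa [hE] using hfin
end

section
/- Let dim H = 2n, V a unitary or antiunitary on H, and φ(P) = I − V P V* on rank-n projections. If Φ is the real-linear extension of φ to self-adjoint finite-rank operators, then for every rank-one projection p one has Φ(p) = (1/n)I − V p V*. In particular Φ maps no rank-one projection to a rank-one projection when n ≥ 2. -/
open Matrix

lemma card_filter_val_Ico (N a b : ℕ) (hb : b ≤ N) :
    (Finset.univ.filter (fun j : Fin N => a ≤ (j : ℕ) ∧ (j : ℕ) < b)).card = b - a := by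
  classical
  have h : ∀ m ∈ Finset.Ico a b, m < N := fun m hm => lt_of_lt_of_le (Finset.mem_Ico.mp hm).2 hb
  have he : Finset.univ.filter (fun j : Fin N => a ≤ (j : ℕ) ∧ (j : ℕ) < b)
      = (Finset.Ico a b).attachFin h := by
    ext j
    simp [Finset.mem_attachFin, Finset.mem_Ico]
  rw [he, Finset.card_attachFin, Nat.card_Ico]

lemma card_cond {N : ℕ} (P : Fin N → Prop) [DecidablePred P] (σ : Equiv.Perm (Fin N)) :
    Fintype.card {i // P (σ i)} = (Finset.univ.filter P).card := by
  classical
  rw [Fintype.card_congr (σ.subtypeEquiv (fun i => Iff.rfl) : {i // P (σ i)} ≃ {j // P j})]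
  exact Fintype.card_subtype P

section sandwich
variable {N : ℕ} (W : Matrix (Fin N) (Fin N) ℂ)

lemma sand_mul (hW1 : Wᴴ * W = 1) (A B : Matrix (Fin N) (Fin N) ℂ) :
    (W * A * Wᴴ) * (W * B * Wᴴ) = W * (A * B) * Wᴴ := by
  calc (W * A * Wᴴ) * (W * B * Wᴴ) = W * A * (Wᴴ * W) * B * Wᴴ := by
        simp only [Matrix.mul_assoc]
    _ = W * (A * B) * Wᴴ := by rw [hW1, Matrix.mul_one]; simp only [Matrix.mul_assoc]

lemma sand_inj (hW1 : Wᴴ * W = 1) {A B : Matrix (Fin N) (Fin N) ℂ}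
    (h : W * A * Wᴴ = W * B * Wᴴ) : A = B := by
  have e : ∀ C : Matrix (Fin N) (Fin N) ℂ, Wᴴ * (W * C * Wᴴ) * W = C := by
    intro C
    simp only [← Matrix.mul_assoc]
    rw [hW1, Matrix.one_mul, Matrix.mul_assoc, hW1, Matrix.mul_one]
  have := congrArg (fun X => Wᴴ * X * W) h
  simpa only [e] using this

lemma sand_herm (g : Fin N → ℂ) (hg : ∀ i, g i = 0 ∨ g i = 1) :
    (W * diagonal g * Wᴴ).IsHermitian := by
  have hsg : star g = g := by
    funext i
    rcases hg i with h | h <;> simp [Pi.star_apply, h]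
  show (W * diagonal g * Wᴴ)ᴴ = _
  rw [conjTranspose_mul, conjTranspose_mul, conjTranspose_conjTranspose,
    diagonal_conjTranspose, hsg]
  simp only [Matrix.mul_assoc]

lemma sand_idem (hW1 : Wᴴ * W = 1) (g : Fin N → ℂ) (hg : ∀ i, g i = 0 ∨ g i = 1) :
    (W * diagonal g * Wᴴ) * (W * diagonal g * Wᴴ) = W * diagonal g * Wᴴ := by
  rw [sand_mul W hW1, diagonal_mul_diagonal]
  have hgg : (fun i => g i * g i) = g := by
    funext i; rcases hg i with h | h <;> simp [h]
  rw [hgg]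

lemma sand_rank (hW1 : Wᴴ * W = 1) (hW2 : W * Wᴴ = 1) (g : Fin N → ℂ) :
    (W * diagonal g * Wᴴ).rank = Fintype.card {i // g i ≠ 0} := by
  have hdW : IsUnit W.det := IsUnit.of_mul_eq_one _ (by rw [← det_mul, hW2, det_one])
  have hdWH : IsUnit Wᴴ.det := IsUnit.of_mul_eq_one _ (by rw [← det_mul, hW1, det_one])
  rw [Matrix.mul_assoc, rank_mul_eq_right_of_isUnit_det W _ hdW,
    rank_mul_eq_left_of_isUnit_det Wᴴ (diagonal g) hdWH, Matrix.rank_diagonal]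

end sandwich

theorem extension_of_complement_map_on_rank_one
    {n : ℕ} (hn : 2 ≤ n)
    (V : Matrix (Fin (2 * n)) (Fin (2 * n)) ℂ)
    (hV : Vᴴ * V = 1 ∧ V * Vᴴ = 1)
    (Φ : Matrix (Fin (2 * n)) (Fin (2 * n)) ℂ → Matrix (Fin (2 * n)) (Fin (2 * n)) ℂ)
    (hherm : ∀ A : Matrix (Fin (2 * n)) (Fin (2 * n)) ℂ, A.IsHermitian → (Φ A).IsHermitian)
    (hadd : ∀ A B : Matrix (Fin (2 * n)) (Fin (2 * n)) ℂ, A.IsHermitian → B.IsHermitian →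
      Φ (A + B) = Φ A + Φ B)
    (hsmul : ∀ (r : ℝ) (A : Matrix (Fin (2 * n)) (Fin (2 * n)) ℂ), A.IsHermitian →
      Φ ((r : ℂ) • A) = (r : ℂ) • Φ A)
    (hext : ∀ P : Matrix (Fin (2 * n)) (Fin (2 * n)) ℂ,
      (P.IsHermitian ∧ P * P = P ∧ P.rank = n) → Φ P = 1 - V * P * Vᴴ) :
    ∀ p : Matrix (Fin (2 * n)) (Fin (2 * n)) ℂ,
      (p.IsHermitian ∧ p * p = p ∧ p.rank = 1) →
      Φ p = ((1 / n : ℝ) : ℂ) • (1 : Matrix (Fin (2 * n)) (Fin (2 * n)) ℂ) - V * p * Vᴴ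
      ∧ ¬ ((Φ p).IsHermitian ∧ Φ p * Φ p = Φ p ∧ (Φ p).rank = 1) := by
  obtain ⟨hV1, hV2⟩ := hV
  intro p hp
  obtain ⟨hpH, hpI, hpR⟩ := hp
  haveI : NeZero (2 * n) := ⟨by omega⟩
  have hn0 : (n : ℂ) ≠ 0 := Nat.cast_ne_zero.mpr (by omega)
  -- spectral decomposition
  set W : Matrix (Fin (2 * n)) (Fin (2 * n)) ℂ :=
    (hpH.eigenvectorUnitary : Matrix (Fin (2 * n)) (Fin (2 * n)) ℂ) with hWdef
  have hW1 : Wᴴ * W = 1 := by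
    rw [← Matrix.star_eq_conjTranspose]
    exact mem_unitaryGroup_iff'.mp hpH.eigenvectorUnitary.2
  have hW2 : W * Wᴴ = 1 := by
    rw [← Matrix.star_eq_conjTranspose]
    exact mem_unitaryGroup_iff.mp hpH.eigenvectorUnitary.2
  have hsp : p = W * diagonal (Complex.ofReal ∘ hpH.eigenvalues) * Wᴴ := by
    rw [← Matrix.star_eq_conjTranspose]
    exact hpH.spectral_theorem
  have hDD : diagonal (Complex.ofReal ∘ hpH.eigenvalues) *
      diagonal (Complex.ofReal ∘ hpH.eigenvalues) = diagonal (Complex.ofReal ∘ hpH.eigenvalues) := by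
    apply sand_inj W hW1
    rw [← sand_mul W hW1, ← hsp, hpI, hsp]
  have hev01 : ∀ i, hpH.eigenvalues i = 0 ∨ hpH.eigenvalues i = 1 := by
    intro i
    have h := congrArg (fun M => M i i) hDD
    simp only [diagonal_mul_diagonal, diagonal_apply_eq, Pi.mul_apply, Function.comp_apply] at h
    have h2 : (hpH.eigenvalues i : ℂ) * ((hpH.eigenvalues i : ℂ) - 1) = 0 := by
      linear_combination h
    rcases mul_eq_zero.mp h2 with h3 | h3
    · left; exact_mod_cast h3
    · right; have := sub_eq_zero.mp h3; exact_mod_cast this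
  have hcard : Fintype.card {i // hpH.eigenvalues i ≠ 0} = 1 := by
    rw [← hpH.rank_eq_card_non_zero_eigs, hpR]
  obtain ⟨⟨i₀, hi₀⟩, huniq⟩ := Fintype.card_eq_one_iff.mp hcard
  have hchar : ∀ i, hpH.eigenvalues i = if i = i₀ then 1 else 0 := by
    intro i
    by_cases h : i = i₀
    · subst h
      rcases hev01 i with h0 | h1
      · exact absurd h0 hi₀
      · simp [h1]
    · simp only [if_neg h]
      by_contra hne
      have := huniq ⟨i, hne⟩
      exact h (congrArg Subtype.val this)
  -- the permutation moving i₀ to 0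
  set σ : Equiv.Perm (Fin (2 * n)) := Equiv.swap 0 i₀ with hσdef
  have hσ0 : ∀ i, σ i = 0 ↔ i = i₀ := by
    intro i
    have h1 : σ i₀ = 0 := Equiv.swap_apply_right 0 i₀
    rw [← h1]
    exact σ.injective.eq_iff
  -- indicator functions
  set g0 : Fin (2 * n) → ℂ := fun i => if σ i = 0 then 1 else 0 with hg0def
  set gU : Fin (2 * n) → ℂ := fun i => if ((σ i : Fin (2 * n)) : ℕ) < n then 1 else 0 with hgUdef
  set gZ : Fin (2 * n) → ℂ := fun i => if n ≤ ((σ i : Fin (2 * n)) : ℕ) then 1 else 0 with hgZdef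
  set gY : Fin n → Fin (2 * n) → ℂ := fun k i =>
    if (1 ≤ ((σ i : Fin (2 * n)) : ℕ) ∧ ((σ i : Fin (2 * n)) : ℕ) < n)
      ∨ ((σ i : Fin (2 * n)) : ℕ) = n + (k : ℕ) then 1 else 0 with hgYdef
  have hpdiag : p = W * diagonal g0 * Wᴴ := by
    have hfun : Complex.ofReal ∘ hpH.eigenvalues = g0 := by
      funext i
      rw [hg0def]
      simp only [Function.comp_apply, hchar i, hσ0 i]
      split_ifs <;> simp
    rw [hsp, hfun]
  -- 0/1 valuedness
  have h01 : ∀ (P : Fin (2*n) → Prop) [DecidablePred P],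
      ∀ i, (if P i then (1:ℂ) else 0) = 0 ∨ (if P i then (1:ℂ) else 0) = 1 := by
    intro P _ i; split_ifs <;> simp
  -- main matrices
  set A : Matrix (Fin (2 * n)) (Fin (2 * n)) ℂ := W * diagonal gU * Wᴴ with hAdef
  set C : Matrix (Fin (2 * n)) (Fin (2 * n)) ℂ := W * diagonal gZ * Wᴴ with hCdef
  set Y : Fin n → Matrix (Fin (2 * n)) (Fin (2 * n)) ℂ :=
    fun k => W * diagonal (gY k) * Wᴴ with hYdef
  set B : Matrix (Fin (2 * n)) (Fin (2 * n)) ℂ := ∑ k : Fin n, Y k with hBdef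
  -- the scalar identity
  have keyid : ∀ i : Fin (2 * n),
      gU i + ((-(1/n) : ℝ) : ℂ) * (∑ k : Fin n, gY k i) + (((1/n) : ℝ) : ℂ) * gZ i = g0 i := by
    intro i
    have hm : ((σ i : Fin (2 * n)) : ℕ) < 2 * n := (σ i).isLt
    have hz : (σ i = 0) ↔ ((σ i : Fin (2 * n)) : ℕ) = 0 := by
      rw [Fin.ext_iff, Fin.val_zero]
    simp only [hg0def, hgUdef, hgZdef, hgYdef]
    set m : ℕ := ((σ i : Fin (2 * n)) : ℕ) with hmdef
    by_cases h0 : m = 0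
    · have hzz : σ i = 0 := hz.mpr h0
      rw [if_pos hzz, if_pos (by omega : m < n), if_neg (by omega : ¬ n ≤ m)]
      have hsum : (∑ k : Fin n, if (1 ≤ m ∧ m < n) ∨ m = n + (k : ℕ) then (1:ℂ) else 0) = 0 := by
        apply Finset.sum_eq_zero
        intro k _
        rw [if_neg]
        rintro (⟨h1, _⟩ | h1) <;> omega
      rw [hsum]
      push_cast
      ring
    · rw [if_neg (fun hc => h0 (hz.mp hc))]
      by_cases hlt : m < n
      · rw [if_pos hlt, if_neg (by omega : ¬ n ≤ m)]
        have hsum : (∑ k : Fin n, if (1 ≤ m ∧ m < n) ∨ m = n + (k : ℕ) then (1:ℂ) else 0)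
            = (n : ℂ) := by
          rw [Finset.sum_congr rfl (fun k _ => if_pos (Or.inl ⟨by omega, hlt⟩))]
          simp
        rw [hsum]
        push_cast
        field_simp
        ring
      · rw [if_neg hlt, if_pos (by omega : n ≤ m)]
        have hiff : ∀ k : Fin n, ((1 ≤ m ∧ m < n) ∨ m = n + (k : ℕ)) ↔ k = ⟨m - n, by omega⟩ := by
          intro k
          rw [Fin.ext_iff]
          constructor
          · rintro (⟨_, h1⟩ | h1)
            · omega
            · simp only []
              omega
          · intro h
            right
            simp only [] at h
            omega
        have hsum : (∑ k : Fin n, if (1 ≤ m ∧ m < n) ∨ m = n + (k : ℕ) then (1:ℂ) else 0)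
            = 1 := by
          calc (∑ k : Fin n, if (1 ≤ m ∧ m < n) ∨ m = n + (k : ℕ) then (1:ℂ) else 0)
              = ∑ k : Fin n, if k = (⟨m - n, by omega⟩ : Fin n) then (1:ℂ) else 0 := by
                apply Finset.sum_congr rfl
                intro k _
                exact if_congr (hiff k) rfl rfl
            _ = 1 := by simp
        rw [hsum]
        push_cast
        ring
  -- the decomposition
  have hdecomp : p = A + ((-(1/n) : ℝ) : ℂ) • B + (((1/n) : ℝ) : ℂ) • C := by
    have hBW : B = W * (∑ k : Fin n, diagonal (gY k)) * Wᴴ := by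
      rw [hBdef, Matrix.mul_sum, Finset.sum_mul]
    rw [hpdiag, hBW, hAdef, hCdef]
    have hsc : ∀ (c : ℂ) (X : Matrix (Fin (2*n)) (Fin (2*n)) ℂ),
        c • (W * X * Wᴴ) = W * (c • X) * Wᴴ := by
      intro c X
      rw [← Matrix.smul_mul, ← Matrix.mul_smul]
    rw [hsc, hsc, ← Matrix.add_mul, ← Matrix.add_mul, ← Matrix.mul_add, ← Matrix.mul_add]
    congr 2
    ext i j
    rcases eq_or_ne i j with hij | hij
    · subst hij
      simp only [Matrix.add_apply, Matrix.smul_apply, Matrix.sum_apply, diagonal_apply_eq,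
        smul_eq_mul]
      exact (keyid i).symm
    · simp [Matrix.add_apply, Matrix.smul_apply, Matrix.sum_apply, diagonal_apply_ne _ hij]
  -- 0/1-valued-ness proofs
  have hgU01 : ∀ i, gU i = 0 ∨ gU i = 1 := by intro i; simp only [hgUdef]; split_ifs <;> simp
  have hgZ01 : ∀ i, gZ i = 0 ∨ gZ i = 1 := by intro i; simp only [hgZdef]; split_ifs <;> simp
  have hgY01 : ∀ k i, gY k i = 0 ∨ gY k i = 1 := by
    intro k i; simp only [hgYdef]; split_ifs <;> simp
  -- hermitian / idempotent
  have hAH : A.IsHermitian := sand_herm W gU hgU01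
  have hCH : C.IsHermitian := sand_herm W gZ hgZ01
  have hYH : ∀ k, (Y k).IsHermitian := fun k => sand_herm W (gY k) (hgY01 k)
  have hAI : A * A = A := sand_idem W hW1 gU hgU01
  have hCI : C * C = C := sand_idem W hW1 gZ hgZ01
  have hYI : ∀ k, Y k * Y k = Y k := fun k => sand_idem W hW1 (gY k) (hgY01 k)
  -- ranks
  have hArank : A.rank = n := by
    rw [hAdef, sand_rank W hW1 hW2]
    have he : ∀ i, gU i ≠ 0 ↔ ((σ i : Fin (2 * n)) : ℕ) < n := by
      intro i; simp only [hgUdef]; split_ifs with h <;> simp [h]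
    rw [Fintype.card_congr (Equiv.subtypeEquivRight he),
      card_cond (fun j : Fin (2 * n) => (j : ℕ) < n) σ]
    have hset : Finset.univ.filter (fun j : Fin (2 * n) => (j : ℕ) < n)
        = Finset.univ.filter (fun j : Fin (2 * n) => 0 ≤ (j : ℕ) ∧ (j : ℕ) < n) := by
      ext j; simp
    rw [hset, card_filter_val_Ico (2 * n) 0 n (by omega)]
    omega
  have hCrank : C.rank = n := by
    rw [hCdef, sand_rank W hW1 hW2]
    have he : ∀ i, gZ i ≠ 0 ↔ n ≤ ((σ i : Fin (2 * n)) : ℕ) := by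
      intro i; simp only [hgZdef]; split_ifs with h <;> simp [h]
    rw [Fintype.card_congr (Equiv.subtypeEquivRight he),
      card_cond (fun j : Fin (2 * n) => n ≤ (j : ℕ)) σ]
    have hset : Finset.univ.filter (fun j : Fin (2 * n) => n ≤ (j : ℕ))
        = Finset.univ.filter (fun j : Fin (2 * n) => n ≤ (j : ℕ) ∧ (j : ℕ) < 2 * n) := by
      ext j; simp [j.isLt]
    rw [hset, card_filter_val_Ico (2 * n) n (2 * n) (by omega)]
    omega
  have hYrank : ∀ k, (Y k).rank = n := by
    intro k
    rw [hYdef, sand_rank W hW1 hW2]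
    have he : ∀ i, gY k i ≠ 0 ↔
        ((1 ≤ ((σ i : Fin (2 * n)) : ℕ) ∧ ((σ i : Fin (2 * n)) : ℕ) < n)
          ∨ ((σ i : Fin (2 * n)) : ℕ) = n + (k : ℕ)) := by
      intro i; simp only [hgYdef]; split_ifs with h <;> simp [h]
    rw [Fintype.card_congr (Equiv.subtypeEquivRight he),
      card_cond (fun j : Fin (2 * n) =>
        (1 ≤ (j : ℕ) ∧ (j : ℕ) < n) ∨ (j : ℕ) = n + (k : ℕ)) σ,
      Finset.filter_or]
    have hdisj : Disjoint
        (Finset.univ.filter (fun j : Fin (2 * n) => 1 ≤ (j : ℕ) ∧ (j : ℕ) < n))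
        (Finset.univ.filter (fun j : Fin (2 * n) => (j : ℕ) = n + (k : ℕ))) := by
      rw [Finset.disjoint_left]
      intro j hj1 hj2
      simp only [Finset.mem_filter] at hj1 hj2
      omega
    rw [Finset.card_union_of_disjoint hdisj, card_filter_val_Ico (2 * n) 1 n (by omega)]
    have hk : (k : ℕ) < n := k.isLt
    have hsing : Finset.univ.filter (fun j : Fin (2 * n) => (j : ℕ) = n + (k : ℕ))
        = {(⟨n + (k : ℕ), by omega⟩ : Fin (2 * n))} := by
      ext j
      simp [Fin.ext_iff]
    rw [hsing, Finset.card_singleton]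
    omega
  -- apply hext
  have hΦA : Φ A = 1 - V * A * Vᴴ := hext A ⟨hAH, hAI, hArank⟩
  have hΦC : Φ C = 1 - V * C * Vᴴ := hext C ⟨hCH, hCI, hCrank⟩
  have hΦY : ∀ k, Φ (Y k) = 1 - V * Y k * Vᴴ := fun k => hext (Y k) ⟨hYH k, hYI k, hYrank k⟩
  -- Φ of zero and of sums
  have hΦ0 : Φ 0 = 0 := by
    have h := hadd 0 0 isHermitian_zero isHermitian_zero
    rw [add_zero] at h
    exact (add_eq_left.mp h.symm)
  have hsumH : ∀ s : Finset (Fin n), (∑ k ∈ s, Y k).IsHermitian := by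
    intro s
    induction s using Finset.induction_on with
    | empty => simpa using isHermitian_zero
    | insert _ _ hnm ih =>
      rw [Finset.sum_insert hnm]
      exact (hYH _).add ih
  have hΦsum : ∀ s : Finset (Fin n), Φ (∑ k ∈ s, Y k) = ∑ k ∈ s, Φ (Y k) := by
    intro s
    induction s using Finset.induction_on with
    | empty => simpa using hΦ0
    
    | insert _ _ hnm ih =>
      rw [Finset.sum_insert hnm, hadd _ _ (hYH _) (hsumH _), ih, Finset.sum_insert hnm]
  have hBH : B.IsHermitian := hsumH Finset.univ
  have hsmulH : ∀ (r : ℝ) (X : Matrix (Fin (2 * n)) (Fin (2 * n)) ℂ), X.IsHermitian →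
      ((r : ℂ) • X).IsHermitian := by
    intro r X hX
    show ((r : ℂ) • X)ᴴ = _
    rw [conjTranspose_smul, hX.eq]
    congr 1
    exact Complex.conj_ofReal r
  -- compute Φ p
  have hΦB : Φ B = (n : ℂ) • (1 : Matrix (Fin (2 * n)) (Fin (2 * n)) ℂ) - V * B * Vᴴ := by
    rw [hBdef, hΦsum Finset.univ]
    rw [Finset.sum_congr rfl (fun k _ => hΦY k), Finset.sum_sub_distrib]
    congr 1
    · simp [← Nat.cast_smul_eq_nsmul ℂ]
    · rw [Matrix.mul_sum, Finset.sum_mul]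
  have hform : Φ p = ((1 / n : ℝ) : ℂ) • (1 : Matrix (Fin (2 * n)) (Fin (2 * n)) ℂ)
      - V * p * Vᴴ := by
    have h1 : Φ p = Φ A + (((-(1/n) : ℝ) : ℂ) • Φ B + (((1/n) : ℝ) : ℂ) • Φ C) := by
      rw [hdecomp, add_assoc,
        hadd _ _ hAH ((hsmulH _ _ hBH).add (hsmulH _ _ hCH)),
        hadd _ _ (hsmulH _ _ hBH) (hsmulH _ _ hCH),
        hsmul _ _ hBH, hsmul _ _ hCH]
    rw [h1, hΦA, hΦB, hΦC, hdecomp]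
    simp only [Matrix.mul_add, Matrix.add_mul, Matrix.mul_smul, Matrix.smul_mul]
    match_scalars
    · push_cast
      field_simp
      ring
    · push_cast
      ring
    · push_cast
      ring
    · push_cast
      ring
  refine ⟨hform, ?_⟩
  rintro ⟨-, hid, -⟩
  set c : ℂ := ((1 / n : ℝ) : ℂ) with hcdef
  set Q : Matrix (Fin (2 * n)) (Fin (2 * n)) ℂ := V * p * Vᴴ with hQdef
  have hnR : (n : ℝ) ≠ 0 := Nat.cast_ne_zero.mpr (by omega)
  have hc0 : c ≠ 0 := Complex.ofReal_ne_zero.mpr (one_div_ne_zero hnR)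
  have hc1 : c ≠ 1 := by
    intro h
    have h2 : ((1 / n : ℝ) : ℂ) = ((1 : ℝ) : ℂ) := by rw [Complex.ofReal_one]; exact h
    have h3 := Complex.ofReal_inj.mp h2
    have h4 : (n : ℝ) = 1 := by field_simp at h3; linarith
    have h5 : n = 1 := by exact_mod_cast h4
    omega
  have h2c : (2 : ℂ) - 2 * c ≠ 0 := by
    intro h
    apply hc1
    have h5 := sub_eq_zero.mp h
    have h6 : (2 : ℂ) * 1 = 2 * c := by rw [mul_one]; exact h5
    exact (mul_left_cancel₀ two_ne_zero h6).symm
  have hQ : Q * Q = Q := by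
    rw [hQdef, sand_mul V hV1, hpI]
  have hdV : IsUnit V.det := IsUnit.of_mul_eq_one _ (by rw [← det_mul, hV2, det_one])
  have hdVH : IsUnit Vᴴ.det := IsUnit.of_mul_eq_one _ (by rw [← det_mul, hV1, det_one])
  have hrkQ : Q.rank = 1 := by
    rw [hQdef, Matrix.mul_assoc, rank_mul_eq_right_of_isUnit_det V _ hdV,
      rank_mul_eq_left_of_isUnit_det Vᴴ p hdVH, hpR]
  rw [hform] at hid
  have hexp : (c • (1 : Matrix (Fin (2 * n)) (Fin (2 * n)) ℂ) - Q) * (c • 1 - Q)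
      = (c * c) • 1 - (2 * c) • Q + Q := by
    simp only [sub_mul, mul_sub, Matrix.smul_mul, Matrix.mul_smul, Matrix.one_mul,
      Matrix.mul_one, smul_smul, hQ]
    module
  have e2 : ((2 : ℂ) - 2 * c) • Q - (c - c * c) • (1 : Matrix (Fin (2 * n)) (Fin (2 * n)) ℂ)
      = ((c * c) • 1 - (2 * c) • Q + Q) - (c • 1 - Q) := by module
  rw [hexp] at hid
  rw [hid, sub_self] at e2
  have h4 := sub_eq_zero.mp e2
  have e3 : Q = (((2 : ℂ) - 2 * c)⁻¹ * (c - c * c)) • (1 : Matrix (Fin (2 * n)) (Fin (2 * n)) ℂ) := by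
    calc Q = ((2 : ℂ) - 2 * c)⁻¹ • (((2 : ℂ) - 2 * c) • Q) := by
          rw [smul_smul, inv_mul_cancel₀ h2c, one_smul]
      _ = _ := by rw [h4, smul_smul]
  have hlam : ((2 : ℂ) - 2 * c)⁻¹ * (c - c * c) ≠ 0 := by
    apply mul_ne_zero (inv_ne_zero h2c)
    have hfac : c - c * c = c * (1 - c) := by ring
    rw [hfac]
    exact mul_ne_zero hc0 (sub_ne_zero.mpr (Ne.symm hc1))
  have hrk2 : Q.rank = 2 * n := by
    rw [e3, smul_one_eq_diagonal, Matrix.rank_diagonal,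
      Fintype.card_congr (Equiv.subtypeUnivEquiv fun i => hlam), Fintype.card_fin]
  omega
end

section
/- Let A be a linear bijection of a finite-dimensional complex Hilbert space H such that for all x, y ∈ H, ⟨x, y⟩ = 0 implies ⟨Ax, Ay⟩ = 0 (A preserves orthogonality). Then A is a scalar multiple of a unitary operator. -/
open scoped InnerProductSpace

theorem orthogonality_preserving_is_scalar_unitary
    (H : Type*) [NormedAddCommGroup H] [InnerProductSpace ℂ H]
    [FiniteDimensional ℂ H] (hdim : 2 ≤ Module.finrank ℂ H)
    (A : H →ₗ[ℂ] H) (hbij : Function.Bijective A)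
    (horth : ∀ x y : H, ⟪x, y⟫_ℂ = 0 → ⟪A x, A y⟫_ℂ = 0) :
    ∃ (c : ℂ) (U : H ≃ₗᵢ[ℂ] H), ∀ x : H, A x = c • U x := by
  classical
  set T : H →ₗ[ℂ] H := (LinearMap.adjoint A) ∘ₗ A with hT
  have hTinner : ∀ x y : H, ⟪x, T y⟫_ℂ = ⟪A x, A y⟫_ℂ := by
    intro x y
    simp [hT, LinearMap.adjoint_inner_right]
  -- every vector is an eigenvector of T
  have heig : ∀ y : H, ∃ c : ℂ, T y = c • y := by
    intro y
    have hmem : T y ∈ (Submodule.span ℂ {y})ᗮᗮ := by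
      intro u hu
      have huy : ⟪u, y⟫_ℂ = 0 := by
        have := hu y (Submodule.mem_span_singleton_self y)
        rw [← inner_conj_symm] at this
        simpa using congrArg (starRingEnd ℂ) this
      rw [hTinner]
      exact horth u y huy
    rw [Submodule.orthogonal_orthogonal] at hmem
    rcases Submodule.mem_span_singleton.mp hmem with ⟨c, hc⟩
    exact ⟨c, hc.symm⟩
  choose f hf using heig
  -- the eigenvalue is independent of the vector
  have hconst : ∀ x y : H, x ≠ 0 → y ≠ 0 → f x = f y := by
    intro x y hx hy
    by_cases hind : LinearIndependent ℂ ![x, y]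
    · have h2 : T (x + y) = f x • x + f y • y := by rw [map_add, hf x, hf y]
      rw [hf (x + y), smul_add] at h2
      have h3 : (f (x + y) - f x) • x + (f (x + y) - f y) • y = 0 := by
        rw [sub_smul, sub_smul, sub_add_sub_comm, sub_eq_zero, h2]
      obtain ⟨e1, e2⟩ := LinearIndependent.pair_iff.mp hind _ _ h3
      rw [sub_eq_zero] at e1 e2
      rw [← e1, ← e2]
    · rw [LinearIndependent.pair_iff' hx] at hind
      push_neg at hind
      obtain ⟨a, ha⟩ := hind
      have ha0 : a ≠ 0 := by rintro rfl; simp at ha; exact hy ha.symm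
      have h1 : T y = (f x) • y := by
        rw [← ha, map_smul, hf x, smul_comm]
      have h2 := hf y
      rw [h1] at h2
      have := sub_eq_zero.mpr h2
      rw [← sub_smul] at this
      rcases smul_eq_zero.mp this with h | h
      · exact sub_eq_zero.mp h
      · exact absurd h hy
  -- pick a nonzero vector
  have hpos : 0 < Module.finrank ℂ H := lt_of_lt_of_le (by norm_num) hdim
  have : Nontrivial H := Module.nontrivial_of_finrank_pos hpos
  obtain ⟨x₀, hx₀⟩ := exists_ne (0 : H)
  set c : ℂ := f x₀ with hc
  have hTall : ∀ x : H, T x = c • x := by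
    intro x
    by_cases hx : x = 0
    · simp [hx]
    · rw [hf x, hconst x x₀ hx hx₀]
  -- inner product identity
  have hinner : ∀ x y : H, ⟪A x, A y⟫_ℂ = c * ⟪x, y⟫_ℂ := by
    intro x y
    rw [← hTinner, hTall, inner_smul_right]
  -- c is a positive real
  have hcval : c * (‖x₀‖ : ℂ) ^ 2 = (‖A x₀‖ : ℂ) ^ 2 := by
    have := hinner x₀ x₀
    rw [inner_self_eq_norm_sq_to_K, inner_self_eq_norm_sq_to_K] at this
    exact this.symm
  have hAx₀ : A x₀ ≠ 0 := fun h => hx₀ (hbij.injective (by simpa using h))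
  have hnx₀ : (‖x₀‖ : ℂ) ≠ 0 := by
    simp [norm_eq_zero, hx₀]
  have hcform : c = ((‖A x₀‖ / ‖x₀‖ : ℝ) : ℂ) ^ 2 := by
    field_simp at hcval ⊢
    rw [Complex.ofReal_div, div_pow, eq_div_iff (pow_ne_zero 2 hnx₀), hcval]
  set r : ℝ := ‖A x₀‖ / ‖x₀‖ with hr
  have hrpos : 0 < r := div_pos (norm_pos_iff.mpr hAx₀) (norm_pos_iff.mpr hx₀)
  have hrne : (r : ℂ) ≠ 0 := by exact_mod_cast hrpos.ne'
  -- build the isometry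
  set B : H ≃ₗ[ℂ] H :=
    (LinearEquiv.ofBijective A hbij).trans
      (LinearEquiv.smulOfNeZero ℂ H ((r : ℂ)⁻¹) (inv_ne_zero hrne)) with hB
  have hBapp : ∀ x : H, B x = (r : ℂ)⁻¹ • A x := fun x => rfl
  have hBinner : ∀ x y : H, ⟪B x, B y⟫_ℂ = ⟪x, y⟫_ℂ := by
    intro x y
    rw [hBapp, hBapp, inner_smul_left, inner_smul_right, hinner, hcform]
    have : (starRingEnd ℂ) ((r : ℂ)⁻¹) = (r : ℂ)⁻¹ := by
      simp [Complex.conj_ofReal]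
    rw [this]
    field_simp
  refine ⟨(r : ℂ), B.isometryOfInner hBinner, fun x => ?_⟩
  have : (B.isometryOfInner hBinner) x = B x := rfl
  rw [this, hBapp, smul_smul, mul_inv_cancel₀ hrne, one_smul]
end
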